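/- arXiv:1507.07397 — 2 statements merged into one kernel-verified Lean document; each statement's English description precedes it below -/
import Mathlib

section
/- Let Ω = [ā] = (√(a²+4) − a)/2 be a metallic ratio, a ≥ 1, with T = [[a,1],[1,0]], λ = 1/Ω = a + Ω, and U = −(T⁻¹)ᵀ. Then the sequence of primary resonances is generated by the primitive integer q̂ = 1, and the separation B₀ satisfies: B₀ = γ̃*_{q₁} = 5 with q₁ = 7 if a = 1; B₀ = γ̃*_{q₁} = a with q₁ = 3 if a = 2; and B₀ = γ̃*_{q₁} = a with q₁ = a±1 (both values of q₁) if a ≥ 3. -/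
open Real Filter Matrix

noncomputable section

/-- Orbit of the Gauss map `g(x) = {1/x}` starting at `Ω`:
`x₀ = Ω`, `x_{j+1} = g(x_j)`. -/
def gaussOrbit (Ω : ℝ) : ℕ → ℝ
  | 0 => Ω
  | j + 1 => Int.fract (1 / gaussOrbit Ω j)

/-- `cfA Ω j` is the partial quotient `a_{j+1}` of the continued fraction of `Ω`. -/
def cfA (Ω : ℝ) (j : ℕ) : ℤ := ⌊1 / gaussOrbit Ω j⌋

/-- The matrix `[[a, 1], [1, 0]]`. -/
def Acf (a : ℤ) : Matrix (Fin 2) (Fin 2) ℤ := !![a, 1; 1, 0]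

/-- The product `A₁ ⋯ A_m` with `A_i = [[a_i, 1], [1, 0]]`. -/
def cfMatProd (Ω : ℝ) (m : ℕ) : Matrix (Fin 2) (Fin 2) ℤ :=
  ((List.range m).map fun i => Acf (cfA Ω i)).prod

/-- `cfQ Ω (j+1) = q_j`:  `q₋₁ = 0`, `q₀ = 1`, `q_j = a_j q_{j-1} + q_{j-2}`. -/
def cfQ (Ω : ℝ) : ℕ → ℤ
  | 0 => 0
  | 1 => 1
  | j + 2 => cfA Ω j * cfQ Ω (j + 1) + cfQ Ω j

/-- `cfP Ω (j+1) = p_j`:  `p₋₁ = 1`, `p₀ = 0`, `p_j = a_j p_{j-1} + p_{j-2}`. -/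
def cfP (Ω : ℝ) : ℕ → ℤ
  | 0 => 1
  | 1 => 0
  | j + 2 => cfA Ω j * cfP Ω (j + 1) + cfP Ω j

/-- The vector convergent `w(j) = (q_j, p_j)`. -/
def wconv (Ω : ℝ) (j : ℕ) : Fin 2 → ℤ := ![cfQ Ω (j + 1), cfP Ω (j + 1)]

/-- The resonant convergent `v(j) = (−p_j, q_j)`. -/
def vconv (Ω : ℝ) (j : ℕ) : Fin 2 → ℤ := ![-cfP Ω (j + 1), cfQ Ω (j + 1)]

/-- A quadratic irrational number. -/
def IsQuadraticIrrational (Ω : ℝ) : Prop :=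
  Irrational Ω ∧ ∃ A B C : ℤ, A ≠ 0 ∧ (A : ℝ) * Ω ^ 2 + (B : ℝ) * Ω + (C : ℝ) = 0

end
noncomputable section

/-- `⟨k, ω⟩ = k₁ + k₂ Ω` for `ω = (1, Ω)`. -/
def pairω (Ω : ℝ) (k : Fin 2 → ℤ) : ℝ := (k 0 : ℝ) + (k 1 : ℝ) * Ω

/-- `|k|₁ = |k₁| + |k₂|`. -/
def norm1 (k : Fin 2 → ℤ) : ℤ := |k 0| + |k 1|

/-- `p⁰(q)`: the integer nearest to `qΩ`. -/
def p0 (Ω : ℝ) (q : ℤ) : ℤ := round ((q : ℝ) * Ω)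

/-- `k⁰(q) = (−p⁰(q), q)`. -/
def kzero (Ω : ℝ) (q : ℤ) : Fin 2 → ℤ := ![-p0 Ω q, q]

/-- The set `A` of quasi-resonances: vectors `k⁰(q)`, `q ≥ 1`, with `|⟨k,ω⟩| < 1/2`. -/
def inA (Ω : ℝ) (k : Fin 2 → ℤ) : Prop :=
  ∃ q : ℤ, 1 ≤ q ∧ k = kzero Ω q ∧ |pairω Ω k| < 1 / 2

/-- A quasi-resonance `k` is primitive if `U⁻¹k` is not a quasi-resonance. -/
def PrimitiveVec (Ω : ℝ) (U : Matrix (Fin 2) (Fin 2) ℤ) (k : Fin 2 → ℤ) : Prop :=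
  inA Ω k ∧ ¬inA Ω (U⁻¹.mulVec k)

/-- A primitive integer `q ≥ 1`. -/
def PrimitiveInt (Ω : ℝ) (U : Matrix (Fin 2) (Fin 2) ℤ) (q : ℤ) : Prop :=
  1 ≤ q ∧ PrimitiveVec Ω U (kzero Ω q)

/-- The resonant sequence `s(q, n) = Uⁿ k⁰(q)`. -/
def sres (Ω : ℝ) (U : Matrix (Fin 2) (Fin 2) ℤ) (q : ℤ) (n : ℕ) : Fin 2 → ℤ :=
  (U ^ n).mulVec (kzero Ω q)

/-- `U = σ (T⁻¹)ᵀ` with `σ = det T = (−1)^m` and `T = A₁⋯A_m`. -/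
def Umat (Ω : ℝ) (m : ℕ) : Matrix (Fin 2) (Fin 2) ℤ :=
  ((-1 : ℤ) ^ m) • ((cfMatProd Ω m)⁻¹)ᵀ

/-- The numerator `γ_k = |⟨k,ω⟩| · |k|₁`. -/
def gammaK (Ω : ℝ) (k : Fin 2 → ℤ) : ℝ := |pairω Ω k| * (norm1 k : ℝ)

/-- `K_q = |z_q|(1+Ω)/|c+bΩ²|`, where `z_q = cq + bpΩ`, `p = p⁰(q)`,
and `b, c` are the off-diagonal entries of `T = A₁⋯A_m = [[a,b],[c,d]]`. -/
def KqD (Ω : ℝ) (m : ℕ) (q : ℤ) : ℝ :=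
  |(cfMatProd Ω m 1 0 : ℝ) * (q : ℝ) + (cfMatProd Ω m 0 1 : ℝ) * (p0 Ω q : ℝ) * Ω| * (1 + Ω) /
    |(cfMatProd Ω m 1 0 : ℝ) + (cfMatProd Ω m 0 1 : ℝ) * Ω ^ 2|

/-- The limit numerator `γ*_q = |r_q| K_q` with `r_q = qΩ − p⁰(q)`. -/
def gammaStarQ (Ω : ℝ) (m : ℕ) (q : ℤ) : ℝ :=
  |(q : ℝ) * Ω - (p0 Ω q : ℝ)| * KqD Ω m q

end

noncomputable section

/-- The metallic ratio `Ω = [ā] = (√(a²+4) − a)/2`. -/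
def metΩ (a : ℤ) : ℝ := (Real.sqrt ((a : ℝ) ^ 2 + 4) - (a : ℝ)) / 2

/-- `T = [[a,1],[1,0]]` for a metallic ratio. -/
def metT (a : ℤ) : Matrix (Fin 2) (Fin 2) ℤ := !![a, 1; 1, 0]

/-- `U = −(T⁻¹)ᵀ` for a metallic ratio. -/
def metU (a : ℤ) : Matrix (Fin 2) (Fin 2) ℤ := (-1 : ℤ) • ((metT a)⁻¹)ᵀ

/-- `δ_q = cq² − (a−d)qp − bp² = q² − aqp − p²` for the metallic `T = [[a,1],[1,0]]`. -/
def metδ (a q : ℤ) : ℤ := q ^ 2 - a * q * p0 (metΩ a) q - (p0 (metΩ a) q) ^ 2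

/-- `γ*_q = Ω(1+Ω)|δ_q|/|c+bΩ²|` for a metallic ratio. -/
def metγ (a q : ℤ) : ℝ :=
  metΩ a * (1 + metΩ a) * |(metδ a q : ℝ)| / |1 + metΩ a ^ 2|

/-- Normalized limit numerator `γ̃*_q = γ*_q/γ*` for a metallic ratio (`q̂ = 1`). -/
def metγt (a q : ℤ) : ℝ := metγ a q / metγ a 1

/-- Primitive integer for a metallic ratio. -/
def metPrim (a q : ℤ) : Prop := PrimitiveInt (metΩ a) (metU a) q

/-- Essential primitive integer for a metallic ratio. -/
def metEssPrim (a q : ℤ) : Prop :=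
  metPrim a q ∧ Int.gcd (kzero (metΩ a) q 0) (kzero (metΩ a) q 1) = 1

/-- The separation `B₀`: the minimal `γ̃*_q` over essential primitive `q ≠ q̂ = 1`. -/
def metB0 (a : ℤ) : ℝ := sInf {y : ℝ | ∃ q : ℤ, metEssPrim a q ∧ q ≠ 1 ∧ y = metγt a q}

end

/-! With `λ = a + Ω = 1/Ω` and `r_q = qΩ - p⁰(q)`, the form factors as
`δ_q = r_q (qλ + p⁰(q))`, and `U⁻¹ k⁰(q) = (a p⁰(q) - q, p⁰(q))` pairs with `ω` to `-λ r_q`.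
So `q ≥ 1` is primitive exactly when `|r_q| < 1/2` and `|r_q| ≥ Ω/2` as soon as `p⁰(q) ≥ 1`, which
gives `|δ_q| ≥ (q + p⁰(q) Ω)/2`. Since `γ*_q` is proportional to `|δ_q|` and `|δ_1| = 1`, we get
`γ̃*_q = |δ_q|`, and `|δ_q| ≥ 2` for every primitive `q ≠ 1`. For `a ≥ 2` and essential `q`,
`|δ_q| < a` would force `q < 2a - 2`, hence `p⁰(q) ∈ {1, 2}`, and these two cases are settled by
hand. For `a = 1`, `q² - qp - p²` is odd for coprime `p, q` and takes only the values `0, ±1`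
modulo 5, so `|δ_q| ≥ 2` improves to `5`. The bounds are attained at `q = a ± 1` (`δ = ±a`)
and, for `a = 1`, at `q = 7` (`δ = 5`). -/

theorem p0_eq_of_abs_sub_lt {Ω : ℝ} {q p : ℤ} (h : |q * Ω - p| < 1 / 2) : p0 Ω q = p := by
  obtain ⟨h₁, h₂⟩ := abs_lt.mp h
  exact round_eq_iff.2 ⟨by linarith, by linarith⟩

theorem p0_nonneg {Ω : ℝ} (hΩ : 0 ≤ Ω) {q : ℤ} (hq : 0 ≤ q) : 0 ≤ p0 Ω q := by
  rw [p0, round_eq]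
  exact Int.floor_nonneg.2 (by positivity)

theorem inA_kzero_iff (Ω : ℝ) (q : ℤ) :
    inA Ω (kzero Ω q) ↔ 1 ≤ q ∧ |q * Ω - p0 Ω q| < 1 / 2 := by
  have hpair : pairω Ω (kzero Ω q) = q * Ω - p0 Ω q := by
    simp [pairω, kzero]; ring
  constructor
  · rintro ⟨q', hq', hk, hlt⟩
    obtain rfl : q = q' := by simpa [kzero] using congrFun hk 1
    exact ⟨hq', hpair ▸ hlt⟩
  · rintro ⟨hq, hlt⟩
    exact ⟨q, hq, rfl, hpair ▸ hlt⟩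

theorem le_abs_sq_sub_mul_sub_one {a q : ℤ} (hq : 1 ≤ q) (hqa : q ≠ a) :
    a ≤ |q ^ 2 - a * q - 1| := by
  rcases hqa.lt_or_gt with h | h
  · rw [abs_of_neg (by nlinarith)]
    nlinarith
  · exact (by nlinarith : a ≤ q ^ 2 - a * q - 1).trans (le_abs_self _)

theorem five_le_abs_sq_sub_mul_sub_sq {p q : ℤ} (hpq : Int.gcd p q = 1)
    (h2 : 2 ≤ |q ^ 2 - q * p - p ^ 2|) : 5 ≤ |q ^ 2 - q * p - p ^ 2| := by
  have hodd : ¬ 2 ∣ q ^ 2 - q * p - p ^ 2 := by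
    intro h
    have hmod2 : ∀ x y : ZMod 2, x ^ 2 - x * y - y ^ 2 = 0 → x = 0 ∧ y = 0 := by decide
    have h' := (ZMod.intCast_zmod_eq_zero_iff_dvd _ 2).2 h
    push_cast at h'
    obtain ⟨hq, hp⟩ := hmod2 _ _ h'
    have := Int.dvd_coe_gcd ((ZMod.intCast_zmod_eq_zero_iff_dvd _ 2).1 hp)
      ((ZMod.intCast_zmod_eq_zero_iff_dvd _ 2).1 hq)
    rw [hpq] at this
    norm_num at this
  have hmod5 : ∀ x y : ZMod 5, x ^ 2 - x * y - y ^ 2 = 0 ∨ x ^ 2 - x * y - y ^ 2 = 1 ∨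
      x ^ 2 - x * y - y ^ 2 = -1 := by decide
  have h5 : ((q ^ 2 - q * p - p ^ 2 : ℤ) : ZMod 5) = ((0 : ℤ) : ZMod 5) ∨
      ((q ^ 2 - q * p - p ^ 2 : ℤ) : ZMod 5) = ((1 : ℤ) : ZMod 5) ∨
      ((q ^ 2 - q * p - p ^ 2 : ℤ) : ZMod 5) = ((-1 : ℤ) : ZMod 5) := by
    push_cast
    exact hmod5 _ _
  simp only [ZMod.intCast_eq_intCast_iff_dvd_sub, Nat.cast_ofNat] at h5
  rcases abs_cases (q ^ 2 - q * p - p ^ 2) with ⟨h, -⟩ | ⟨h, -⟩ <;>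
    rw [h] at h2 ⊢ <;> omega

section Metallic

variable {a q : ℤ}

theorem metΩ_sq_add_mul (a : ℤ) : metΩ a ^ 2 + a * metΩ a = 1 := by
  have h := Real.sq_sqrt (by positivity : (0 : ℝ) ≤ (a : ℝ) ^ 2 + 4)
  unfold metΩ
  linear_combination h / 4

theorem metΩ_mul_add (a : ℤ) : metΩ a * (a + metΩ a) = 1 := by
  linear_combination metΩ_sq_add_mul a

theorem metΩ_pos (a : ℤ) : 0 < metΩ a := by
  have h : (a : ℝ) < Real.sqrt ((a : ℝ) ^ 2 + 4) :=
    Real.lt_sqrt_of_sq_lt (by linarith)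
  unfold metΩ
  linarith

theorem add_metΩ_eq_inv (a : ℤ) : (a + metΩ a : ℝ) = (metΩ a)⁻¹ :=
  eq_inv_of_mul_eq_one_right (metΩ_mul_add a)

theorem add_metΩ_pos (a : ℤ) : (0 : ℝ) < a + metΩ a := by
  rw [add_metΩ_eq_inv]
  exact inv_pos.2 (metΩ_pos a)

theorem metΩ_lt_half (ha : 2 ≤ a) : metΩ a < 1 / 2 := by
  have ha' : (2 : ℝ) ≤ a := by exact_mod_cast ha
  nlinarith [metΩ_sq_add_mul a, metΩ_pos a]

theorem metΩ_lt_third (ha : 3 ≤ a) : metΩ a < 1 / 3 := by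
  have ha' : (3 : ℝ) ≤ a := by exact_mod_cast ha
  nlinarith [metΩ_sq_add_mul a, metΩ_pos a]

theorem metΩ_one_mem_Ioo : metΩ 1 ∈ Set.Ioo (8 / 13) (9 / 14) := by
  have h := metΩ_sq_add_mul 1
  push_cast at h
  constructor <;> nlinarith [metΩ_pos 1]

theorem metU_eq (a : ℤ) : metU a = !![0, -1; -1, a] := by
  have hT : (metT a)⁻¹ = !![0, 1; 1, -a] :=
    Matrix.inv_eq_right_inv (by simp [metT, Matrix.one_fin_two])
  rw [metU, hT]
  ext i j; fin_cases i <;> fin_cases j <;> simp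

theorem metU_inv_mulVec_kzero (a q : ℤ) :
    (metU a)⁻¹ *ᵥ kzero (metΩ a) q = ![a * p0 (metΩ a) q - q, p0 (metΩ a) q] := by
  have hU : (metU a)⁻¹ = !![-a, -1; -1, 0] :=
    Matrix.inv_eq_right_inv (by simp [metU_eq, Matrix.one_fin_two])
  ext i; fin_cases i <;> simp [hU, kzero, Matrix.mulVec, dotProduct, Fin.sum_univ_two]; ring

theorem abs_mul_add_metΩ_lt_half_iff {r : ℝ} (a : ℤ) :
    |r| * (a + metΩ a) < 1 / 2 ↔ |r| < metΩ a / 2 := by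
  rw [add_metΩ_eq_inv, ← div_eq_mul_inv, div_lt_iff₀ (metΩ_pos a)]
  constructor <;> intro h <;> linarith

theorem inA_metU_inv_mulVec_kzero_iff (a q : ℤ) :
    inA (metΩ a) ((metU a)⁻¹ *ᵥ kzero (metΩ a) q) ↔
      1 ≤ p0 (metΩ a) q ∧ |q * metΩ a - p0 (metΩ a) q| < metΩ a / 2 := by
  rw [metU_inv_mulVec_kzero, ← abs_mul_add_metΩ_lt_half_iff a]
  generalize p0 (metΩ a) q = p
  have hid : p * metΩ a - (q - a * p) = -((q * metΩ a - p) * (a + metΩ a)) := by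
    linear_combination q * metΩ_sq_add_mul a
  have hpair : pairω (metΩ a) ![a * p - q, p] = -((q * metΩ a - p) * (a + metΩ a)) := by
    simp only [pairω, Matrix.cons_val_zero, Matrix.cons_val_one]
    push_cast; linear_combination hid
  have habs : |(q * metΩ a - p) * (a + metΩ a)| = |q * metΩ a - p| * (a + metΩ a) := by
    rw [abs_mul, abs_of_pos (add_metΩ_pos a)]
  constructor
  · rintro ⟨p', hp', hk, hlt⟩
    obtain rfl : p = p' := by simpa [kzero] using congrFun hk 1
    rw [hpair, abs_neg, habs] at hlt
    exact ⟨hp', hlt⟩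
  · rintro ⟨hp, hlt⟩
    refine ⟨p, hp, ?_, by rwa [hpair, abs_neg, habs]⟩
    have hround : p0 (metΩ a) p = q - a * p :=
      p0_eq_of_abs_sub_lt (by push_cast; rwa [hid, abs_neg, habs])
    ext i; fin_cases i <;> simp [kzero, hround]

theorem metPrim_iff :
    metPrim a q ↔ 1 ≤ q ∧ |q * metΩ a - p0 (metΩ a) q| < 1 / 2 ∧
      (1 ≤ p0 (metΩ a) q → metΩ a / 2 ≤ |q * metΩ a - p0 (metΩ a) q|) := by
  simp only [metPrim, PrimitiveInt, PrimitiveVec, inA_kzero_iff,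
    inA_metU_inv_mulVec_kzero_iff, not_and, not_lt]
  tauto

theorem metδ_eq_mul (a q : ℤ) :
    (metδ a q : ℝ) = (q * metΩ a - p0 (metΩ a) q) * (q * (a + metΩ a) + p0 (metΩ a) q) := by
  unfold metδ
  push_cast
  linear_combination -(q : ℝ) ^ 2 * metΩ_sq_add_mul a

theorem add_div_two_le_abs_metδ (hq : metPrim a q) (hp : 1 ≤ p0 (metΩ a) q) :
    (q + p0 (metΩ a) q * metΩ a) / 2 ≤ |(metδ a q : ℝ)| := by
  obtain ⟨hq1, -, hr⟩ := metPrim_iff.1 hq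
  have hpos : (0 : ℝ) ≤ q * (a + metΩ a) + p0 (metΩ a) q := by
    have := add_metΩ_pos a
    have : (1 : ℝ) ≤ q := by exact_mod_cast hq1
    have : (1 : ℝ) ≤ p0 (metΩ a) q := by exact_mod_cast hp
    positivity
  calc (q + p0 (metΩ a) q * metΩ a) / 2
      = metΩ a / 2 * (q * (a + metΩ a) + p0 (metΩ a) q) := by
        linear_combination -(q : ℝ) / 2 * metΩ_mul_add a
    _ ≤ |q * metΩ a - p0 (metΩ a) q| * (q * (a + metΩ a) + p0 (metΩ a) q) :=
        mul_le_mul_of_nonneg_right (hr hp) hpos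
    _ = |(metδ a q : ℝ)| := by rw [metδ_eq_mul, abs_mul, abs_of_nonneg hpos]

theorem two_le_abs_metδ (hq : metPrim a q) (hq1 : q ≠ 1) : 2 ≤ |metδ a q| := by
  have hq2 : 2 ≤ q := by have := (metPrim_iff.1 hq).1; omega
  rcases (p0_nonneg (metΩ_pos a).le (by omega : 0 ≤ q)).eq_or_lt with hp | hp
  · have hδ : metδ a q = q ^ 2 := by rw [metδ, ← hp]; ring
    rw [hδ, abs_of_nonneg (sq_nonneg q)]
    nlinarith
  · have h := add_div_two_le_abs_metδ hq hp
    have : (2 : ℝ) ≤ q := by exact_mod_cast hq2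
    have : (1 : ℝ) ≤ p0 (metΩ a) q := by exact_mod_cast hp
    have : (1 : ℝ) < |(metδ a q : ℝ)| := by nlinarith [metΩ_pos a]
    have : 1 < |metδ a q| := by exact_mod_cast this
    omega

theorem p0_metΩ_one_of_two_le (ha : 2 ≤ a) : p0 (metΩ a) 1 = 0 :=
  p0_eq_of_abs_sub_lt (by
    rw [abs_of_pos (by simpa using metΩ_pos a)]
    simpa using metΩ_lt_half ha)

theorem p0_metΩ_one_one : p0 (metΩ 1) 1 = 1 :=
  p0_eq_of_abs_sub_lt (by
    obtain ⟨h₁, h₂⟩ := metΩ_one_mem_Ioo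
    rw [abs_lt]; constructor <;> push_cast <;> linarith)

theorem metPrim_one (ha : 1 ≤ a) : metPrim a 1 := by
  rcases ha.eq_or_lt with rfl | ha
  · obtain ⟨h₁, h₂⟩ := metΩ_one_mem_Ioo
    refine metPrim_iff.2 ⟨le_rfl, ?_, fun _ => ?_⟩ <;>
      rw [p0_metΩ_one_one, abs_of_neg (by push_cast; linarith)] <;> push_cast <;> linarith
  · refine metPrim_iff.2 ⟨le_rfl, ?_, fun h => by rw [p0_metΩ_one_of_two_le ha] at h; omega⟩
    rw [p0_metΩ_one_of_two_le ha, abs_of_pos (by simpa using metΩ_pos a)]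
    simpa using metΩ_lt_half ha

theorem abs_metδ_one (ha : 1 ≤ a) : |metδ a 1| = 1 := by
  rcases ha.eq_or_lt with rfl | ha
  · rw [metδ, p0_metΩ_one_one]; rfl
  · rw [metδ, p0_metΩ_one_of_two_le ha]; simp

theorem metγ_eq_mul (ha : 1 ≤ a) (q : ℤ) : metγ a q = metγ a 1 * |(metδ a q : ℝ)| := by
  have h : |(metδ a 1 : ℝ)| = 1 := by exact_mod_cast abs_metδ_one ha
  simp only [metγ, h]
  ring

theorem metγ_one_pos (ha : 1 ≤ a) : 0 < metγ a 1 := by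
  have h : |(metδ a 1 : ℝ)| = 1 := by exact_mod_cast abs_metδ_one ha
  have := metΩ_pos a
  rw [metγ, h]
  positivity

theorem metγt_eq (ha : 1 ≤ a) (q : ℤ) : metγt a q = |(metδ a q : ℝ)| := by
  rw [metγt, metγ_eq_mul ha q, mul_div_cancel_left₀ _ (metγ_one_pos ha).ne']

theorem metγ_one_lt (ha : 1 ≤ a) (hq : metPrim a q) (hq1 : q ≠ 1) : metγ a 1 < metγ a q := by
  have h : (2 : ℝ) ≤ |(metδ a q : ℝ)| := by exact_mod_cast two_le_abs_metδ hq hq1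
  rw [metγ_eq_mul ha q]
  nlinarith [metγ_one_pos ha]

theorem metEssPrim_of_p0_eq_one (hq : metPrim a q) (hp : p0 (metΩ a) q = 1) :
    metEssPrim a q :=
  ⟨hq, by simp [kzero, hp]⟩

theorem add_one_mul_metΩ_sub_one (a : ℤ) :
    ((a + 1 : ℤ) : ℝ) * metΩ a - (1 : ℤ) = metΩ a * (1 - metΩ a) := by
  push_cast
  linear_combination metΩ_sq_add_mul a

theorem p0_metΩ_add_one (ha : 2 ≤ a) : p0 (metΩ a) (a + 1) = 1 := by
  have := metΩ_pos a
  have := metΩ_lt_half ha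
  apply p0_eq_of_abs_sub_lt
  rw [add_one_mul_metΩ_sub_one, abs_of_pos (by nlinarith)]
  nlinarith

theorem metEssPrim_add_one (ha : 2 ≤ a) : metEssPrim a (a + 1) := by
  have := metΩ_pos a
  have := metΩ_lt_half ha
  refine metEssPrim_of_p0_eq_one (metPrim_iff.2 ⟨by omega, ?_, fun _ => ?_⟩)
    (p0_metΩ_add_one ha) <;>
    rw [p0_metΩ_add_one ha, add_one_mul_metΩ_sub_one, abs_of_pos (by nlinarith)] <;> nlinarith

theorem metδ_add_one (ha : 2 ≤ a) : metδ a (a + 1) = a := by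
  rw [metδ, p0_metΩ_add_one ha]; ring

theorem metγt_add_one (ha : 2 ≤ a) : metγt a (a + 1) = a := by
  rw [metγt_eq (by omega), metδ_add_one ha, abs_of_pos (by exact_mod_cast (by omega : 0 < a))]

theorem sub_one_mul_metΩ_sub_one (a : ℤ) :
    ((a - 1 : ℤ) : ℝ) * metΩ a - (1 : ℤ) = -(metΩ a * (1 + metΩ a)) := by
  push_cast
  linear_combination metΩ_sq_add_mul a

theorem p0_metΩ_sub_one (ha : 3 ≤ a) : p0 (metΩ a) (a - 1) = 1 := by
  have := metΩ_pos a
  have := metΩ_lt_third ha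
  apply p0_eq_of_abs_sub_lt
  rw [sub_one_mul_metΩ_sub_one, abs_neg, abs_of_pos (by positivity)]
  nlinarith

theorem metEssPrim_sub_one (ha : 3 ≤ a) : metEssPrim a (a - 1) := by
  have := metΩ_pos a
  have := metΩ_lt_third ha
  refine metEssPrim_of_p0_eq_one (metPrim_iff.2 ⟨by omega, ?_, fun _ => ?_⟩)
    (p0_metΩ_sub_one ha) <;>
    rw [p0_metΩ_sub_one ha, sub_one_mul_metΩ_sub_one, abs_neg, abs_of_pos (by positivity)] <;>
    nlinarith

theorem metδ_sub_one (ha : 3 ≤ a) : metδ a (a - 1) = -a := by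
  rw [metδ, p0_metΩ_sub_one ha]; ring

theorem metγt_sub_one (ha : 3 ≤ a) : metγt a (a - 1) = a := by
  rw [metγt_eq (by omega), metδ_sub_one ha, Int.cast_neg, abs_neg,
    abs_of_pos (by exact_mod_cast (by omega : 0 < a))]

theorem p0_metΩ_one_seven : p0 (metΩ 1) 7 = 4 := by
  obtain ⟨h₁, h₂⟩ := metΩ_one_mem_Ioo
  apply p0_eq_of_abs_sub_lt
  rw [abs_lt]; constructor <;> push_cast <;> linarith

theorem metEssPrim_one_seven : metEssPrim 1 7 := by
  obtain ⟨h₁, h₂⟩ := metΩ_one_mem_Ioo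
  refine ⟨metPrim_iff.2 ⟨by norm_num, ?_, fun _ => ?_⟩,
    by simp [kzero, p0_metΩ_one_seven]; rfl⟩ <;>
    rw [p0_metΩ_one_seven, abs_of_pos (by push_cast; linarith)] <;> push_cast <;> linarith

theorem metδ_one_seven : metδ 1 7 = 5 := by
  rw [metδ, p0_metΩ_one_seven]; rfl

theorem metγt_one_seven : metγt 1 7 = 5 := by
  rw [metγt_eq le_rfl, metδ_one_seven]
  norm_num

theorem one_le_p0_of_metEssPrim (h : metEssPrim a q) (hq1 : q ≠ 1) : 1 ≤ p0 (metΩ a) q := by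
  have hq := (metPrim_iff.1 h.1).1
  rcases (p0_nonneg (metΩ_pos a).le (by omega : 0 ≤ q)).eq_or_lt with hp | hp
  · have hgcd := h.2
    simp only [kzero, ← hp, Matrix.cons_val_zero, Matrix.cons_val_one, neg_zero,
      Int.gcd_zero_left] at hgcd
    omega
  · exact hp

theorem gcd_p0_of_metEssPrim (h : metEssPrim a q) : Int.gcd (p0 (metΩ a) q) q = 1 := by
  simpa [kzero] using h.2

theorem p0_metΩ_le_two (hq : q < 2 * a) : p0 (metΩ a) q ≤ 2 := by
  have hqa : (q : ℝ) < 2 * a := by exact_mod_cast hq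
  have hlt : (p0 (metΩ a) q : ℝ) < 3 := by
    have := round_le_add_half ((q : ℝ) * metΩ a)
    rw [p0]
    nlinarith [metΩ_pos a, metΩ_sq_add_mul a]
  have : p0 (metΩ a) q < 3 := by exact_mod_cast hlt
  omega

theorem le_abs_metδ_of_p0_eq_one (ha : 2 ≤ a) (hq : metPrim a q) (hp : p0 (metΩ a) q = 1) :
    a ≤ |metδ a q| := by
  obtain ⟨hq1, -, hr⟩ := metPrim_iff.1 hq
  have hδ : metδ a q = q ^ 2 - a * q - 1 := by rw [metδ, hp]; ring
  rcases eq_or_ne q a with rfl | hqa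
  · have hr₁ : (q : ℝ) * metΩ q - (1 : ℤ) = -metΩ q ^ 2 := by
      push_cast; linear_combination metΩ_sq_add_mul q
    have h := hr hp.ge
    rw [hp, hr₁, abs_neg, abs_of_pos (pow_pos (metΩ_pos q) 2)] at h
    nlinarith [metΩ_pos q, metΩ_lt_half ha]
  · exact hδ ▸ le_abs_sq_sub_mul_sub_one hq1 hqa

theorem le_abs_metδ_of_p0_eq_two (ha : 2 ≤ a) (hq : metPrim a q) (hp : p0 (metΩ a) q = 2)
    (hqa : q + 3 ≤ 2 * a) : a ≤ |metδ a q| := by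
  obtain ⟨-, hr, -⟩ := metPrim_iff.1 hq
  rw [hp] at hr
  have haq : a < q := by
    have : (3 : ℝ) / 2 < q * metΩ a := by push_cast at hr; linarith [(abs_lt.1 hr).1]
    have : (a : ℝ) < q := by
      by_contra! h
      nlinarith [metΩ_pos a, metΩ_sq_add_mul a, mul_le_mul_of_nonneg_right h (metΩ_pos a).le]
    exact_mod_cast this
  have hδ : metδ a q = q ^ 2 - 2 * a * q - 4 := by rw [metδ, hp]; ring
  rw [hδ, abs_of_neg (by nlinarith)]
  nlinarith

theorem le_abs_metδ_of_metEssPrim (ha : 2 ≤ a) (h : metEssPrim a q) (hq1 : q ≠ 1) :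
    a ≤ |metδ a q| := by
  have hp := one_le_p0_of_metEssPrim h hq1
  by_contra! hlt
  have hq : q + 3 ≤ 2 * a := by
    have hle := add_div_two_le_abs_metδ h.1 hp
    have hδ : |(metδ a q : ℝ)| ≤ a - 1 := by exact_mod_cast (by omega : |metδ a q| ≤ a - 1)
    have : (1 : ℝ) ≤ p0 (metΩ a) q := by exact_mod_cast hp
    have : (q : ℝ) < 2 * a - 2 := by nlinarith [metΩ_pos a]
    have : q < 2 * a - 2 := by exact_mod_cast this
    omega
  obtain hp1 | hp2 : p0 (metΩ a) q = 1 ∨ p0 (metΩ a) q = 2 := by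
    have := p0_metΩ_le_two (by omega : q < 2 * a)
    omega
  · exact hlt.not_ge (le_abs_metδ_of_p0_eq_one ha h.1 hp1)
  · exact hlt.not_ge (le_abs_metδ_of_p0_eq_two ha h.1 hp2 hq)

theorem five_le_abs_metδ_one (h : metEssPrim 1 q) (hq1 : q ≠ 1) : 5 ≤ |metδ 1 q| := by
  have hδ : metδ 1 q = q ^ 2 - q * p0 (metΩ 1) q - p0 (metΩ 1) q ^ 2 := by rw [metδ]; ring
  rw [hδ]
  exact five_le_abs_sq_sub_mul_sub_sq (gcd_p0_of_metEssPrim h) (hδ ▸ two_le_abs_metδ h.1 hq1)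

theorem metB0_eq_of_forall_le (ha : 1 ≤ a) {b : ℤ} (hq : metEssPrim a q) (hq1 : q ≠ 1)
    (hδ : |metδ a q| = b) (hle : ∀ q', metEssPrim a q' → q' ≠ 1 → b ≤ |metδ a q'|) :
    metB0 a = b := by
  refine IsLeast.csInf_eq ⟨⟨q, hq, hq1, ?_⟩, ?_⟩
  · rw [metγt_eq ha]
    exact_mod_cast hδ.symm
  · rintro _ ⟨q', hq', hq'1, rfl⟩
    rw [metγt_eq ha]
    exact_mod_cast hle q' hq' hq'1

theorem metB0_of_two_le (ha : 2 ≤ a) : metB0 a = a := by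
  refine metB0_eq_of_forall_le (by omega) (metEssPrim_add_one ha) (by omega) ?_
    fun _ => le_abs_metδ_of_metEssPrim ha
  rw [metδ_add_one ha, abs_of_pos (by omega)]

theorem metB0_one : metB0 1 = 5 :=
  metB0_eq_of_forall_le le_rfl metEssPrim_one_seven (by norm_num)
    (by rw [metδ_one_seven]; rfl) fun _ => five_le_abs_metδ_one

end Metallic

/-- Proposition 6: for a metallic ratio `Ω = [ā]`, the primary resonances are generated
by the primitive integer `q̂ = 1`, and the separation is `B₀ = γ̃*_{q₁} = 5` with `q₁ = 7`
if `a = 1`, `B₀ = γ̃*_{q₁} = a` with `q₁ = 3` if `a = 2`, and `B₀ = γ̃*_{q₁} = a` with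
`q₁ = a ± 1` (both values) if `a ≥ 3`. -/
theorem splitting_quadratic_stmt14 (a : ℤ) (ha : 1 ≤ a) :
    metPrim a 1 ∧
    (∀ q : ℤ, metPrim a q → q ≠ 1 → metγ a 1 < metγ a q) ∧
    (a = 1 → metEssPrim a 7 ∧ metγt a 7 = 5 ∧ metB0 a = 5) ∧
    (a = 2 → metEssPrim a 3 ∧ metγt a 3 = (a : ℝ) ∧ metB0 a = (a : ℝ)) ∧
    (3 ≤ a → metEssPrim a (a - 1) ∧ metEssPrim a (a + 1) ∧
      metγt a (a - 1) = (a : ℝ) ∧ metγt a (a + 1) = (a : ℝ) ∧ metB0 a = (a : ℝ)) := by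
  refine ⟨metPrim_one ha, fun _ => metγ_one_lt ha, ?_, ?_, fun ha3 => ?_⟩
  · rintro rfl
    exact ⟨metEssPrim_one_seven, metγt_one_seven, metB0_one⟩
  · rintro rfl
    exact ⟨metEssPrim_add_one le_rfl, metγt_add_one le_rfl, metB0_of_two_le le_rfl⟩
  · have ha2 : 2 ≤ a := by omega
    exact ⟨metEssPrim_sub_one ha3, metEssPrim_add_one ha2, metγt_sub_one ha3,
      metγt_add_one ha2, metB0_of_two_le ha2⟩
end

section
/- Let f₁, f₂ : ℝ² → ℝ be differentiable functions, 2π-periodic in each variable, satisfying f_i(ψ)² + (|∂f_i/∂ψ₁(ψ)| + |∂f_i/∂ψ₂(ψ)|)² < 1 for all ψ ∈ ℝ² and i = 1,2. Then the system sin ψ₁ = f₁(ψ), sin ψ₂ = f₂(ψ) has exactly 4 solutions ψ* in the torus T² = (ℝ/2πℤ)², and all of them are simple (the Jacobian determinant of the map ψ ↦ (sin ψ₁ − f₁(ψ), sin ψ₂ − f₂(ψ)) is nonzero at each solution). Furthermore, there is a constant C such that if |f₁(ψ)| ≤ η and |f₂(ψ)| ≤ η for all ψ with η sufficiently small, then each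 solution ψ* lies within distance Cη of one of the four points (0,0), (0,π), (π,0), (π,π), and each of these four points has exactly one solution nearby. -/
open Real

noncomputable section

/-- The map `ψ ↦ (sin ψ₁ − f₁(ψ), sin ψ₂ − f₂(ψ))`, whose zeros are the solutions of
the system `sin ψ₁ = f₁(ψ)`, `sin ψ₂ = f₂(ψ)`. -/
def Fmap (f₁ f₂ : ℝ × ℝ → ℝ) : ℝ × ℝ → ℝ × ℝ :=
  fun ψ => (Real.sin ψ.1 - f₁ ψ, Real.sin ψ.2 - f₂ ψ)

/-- The four points `(0,0)`, `(0,π)`, `(π,0)`, `(π,π)`. -/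
def basePts : Set (ℝ × ℝ) := {(0, 0), (0, π), (π, 0), (π, π)}

end

/-! For `k ∈ ℤ²`, the solutions in the closed square of half-side `π/2` around `πk` are the fixed
points of `ψ ↦ (kᵢπ + (-1)^kᵢ arcsin fᵢ(ψ))ᵢ`. The bound on `fᵢ` says that `arcsin ∘ fᵢ` has
gradient of `ℓ¹`-norm `< 1`, so this map strictly contracts the sup-distance; it also maps the
plane into that compact square, hence has exactly one fixed point `p_k`, at distance
`max |arcsin fᵢ(p_k)| ≤ (π/2) sup |fᵢ| < π/2` from `πk`. The squares cover the plane, so the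
solutions are exactly the `p_k`, and by periodicity `p_{k+2n} = p_k + 2πn`: modulo `2π` there are
four of them, one near each of `(0,0), (0,π), (π,0), (π,π)`. At a solution
`|cos ψᵢ| = √(1 - fᵢ²) > |∂₁fᵢ| + |∂₂fᵢ|`, so the Jacobian is diagonally dominant. -/

open Set Metric Function

theorem dist_lt_dist_of_norm_fderiv_lt_one {E : Type*} [NormedAddCommGroup E] [NormedSpace ℝ E]
    {g : E → ℝ} {g' : E → E →L[ℝ] ℝ} (hg : ∀ z, HasFDerivAt g (g' z) z)
    (hg' : ∀ z, ‖g' z‖ < 1) {x y : E} (hxy : x ≠ y) : dist (g x) (g y) < dist x y := by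
  set v := y - x
  have hv : 0 < ‖v‖ := norm_pos_iff.2 (sub_ne_zero.2 hxy.symm)
  have hline : ∀ t : ℝ, HasDerivAt (fun t : ℝ => g (x + t • v)) (g' (x + t • v) v) t := fun t => by
    have h : HasDerivAt (fun t : ℝ => x + t • v) v t := by
      simpa using ((hasDerivAt_id t).smul_const v).const_add x
    exact (hg _).comp_hasDerivAt t h
  obtain ⟨c, -, hc⟩ := exists_hasDerivAt_eq_slope _ _ zero_lt_one
    (fun t _ => (hline t).continuousAt.continuousWithinAt) (fun t _ => hline t)
  calc dist (g x) (g y) = |g' (x + c • v) v| := by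
        rw [hc, dist_comm, Real.dist_eq]; simp [v]
    _ ≤ ‖g' (x + c • v)‖ * ‖v‖ := (g' _).le_opNorm v
    _ < ‖v‖ := mul_lt_of_lt_one_left hv (hg' _)
    _ = dist x y := by rw [dist_comm, dist_eq_norm]

theorem ContinuousLinearMap.norm_le_abs_apply_add_abs_apply (L : ℝ × ℝ →L[ℝ] ℝ) :
    ‖L‖ ≤ |L (1, 0)| + |L (0, 1)| := by
  refine L.opNorm_le_bound (by positivity) fun v => ?_
  have hv : v = v.1 • ((1 : ℝ), (0 : ℝ)) + v.2 • ((0 : ℝ), (1 : ℝ)) := by ext <;> simp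
  calc ‖L v‖ = |v.1 * L (1, 0) + v.2 * L (0, 1)| := by
        rw [Real.norm_eq_abs, hv, map_add, map_smul, map_smul, smul_eq_mul, smul_eq_mul]
        simp
    _ ≤ |v.1| * |L (1, 0)| + |v.2| * |L (0, 1)| := by
        rw [← abs_mul, ← abs_mul]; exact abs_add_le _ _
    _ ≤ ‖v‖ * |L (1, 0)| + ‖v‖ * |L (0, 1)| := by
        gcongr
        exacts [_root_.norm_fst_le v, _root_.norm_snd_le v]
    _ = _ := by ring

theorem existsUnique_isFixedPt_of_dist_lt {X : Type*} [MetricSpace X] [Nonempty X] {T : X → X}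
    {K : Set X} (hK : IsCompact K) (hTK : ∀ x, T x ∈ K)
    (hT : ∀ x y, x ≠ y → dist (T x) (T y) < dist x y) : ∃! p, IsFixedPt T p := by
  have hTle : ∀ x y, dist (T x) (T y) ≤ 1 * dist x y := fun x y => by
    rcases eq_or_ne x y with rfl | hxy
    · simp
    · linarith [hT x y hxy]
  have hTc : Continuous T := (LipschitzWith.of_dist_le' hTle).continuous
  obtain ⟨m, -, hmin⟩ := hK.exists_isMinOn ⟨_, hTK (Classical.arbitrary X)⟩
    (hTc.dist continuous_id).continuousOn
  have hm : IsFixedPt T m := by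
    by_contra hne
    exact (hT _ _ hne).not_ge (hmin (hTK m))
  refine ⟨m, hm, fun q hq => ?_⟩
  by_contra hne
  have := hT q m hne
  rw [hq, hm.eq] at this
  exact lt_irrefl _ this

theorem exists_abs_sub_int_mul_pi_le (t : ℝ) : ∃ k : ℤ, |t - k * π| ≤ π / 2 := by
  refine ⟨round (t / π), ?_⟩
  have h : t - round (t / π) * π = (t / π - round (t / π)) * π := by field_simp
  rw [h, abs_mul, abs_of_pos pi_pos]
  nlinarith [abs_sub_round (t / π), pi_pos]

theorem eq_of_abs_sub_int_mul_pi_lt {t : ℝ} {k k' : ℤ} (hk : |t - k * π| < π / 2)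
    (hk' : |t - k' * π| < π / 2) : k = k' := by
  have h : |((k - k' : ℤ) : ℝ)| * π < 1 * π := by
    calc |((k - k' : ℤ) : ℝ)| * π = |(t - k' * π) - (t - k * π)| := by
          rw [← abs_of_pos pi_pos, ← abs_mul, abs_of_pos pi_pos]; push_cast; ring_nf
      _ ≤ |t - k' * π| + |t - k * π| := abs_sub _ _
      _ < 1 * π := by linarith
  have := lt_of_mul_lt_mul_right h pi_pos.le
  rw [← Int.cast_abs, ← Int.cast_one, Int.cast_lt, Int.abs_lt_one_iff] at this
  omega

theorem abs_arcsin_le_pi_div_two (y : ℝ) : |arcsin y| ≤ π / 2 :=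
  abs_le.2 ⟨neg_pi_div_two_le_arcsin y, arcsin_le_pi_div_two y⟩

theorem abs_arcsin_le_pi_div_two_mul_abs {y : ℝ} (hy : |y| ≤ 1) :
    |arcsin y| ≤ π / 2 * |y| := by
  have h := mul_abs_le_abs_sin (abs_arcsin_le_pi_div_two y)
  rw [sin_arcsin (abs_le.1 hy).1 (abs_le.1 hy).2] at h
  rw [div_mul_eq_mul_div, div_le_iff₀ pi_pos] at h
  linarith

theorem abs_arcsin_lt_pi_div_two {y : ℝ} (hy : |y| < 1) : |arcsin y| < π / 2 :=
  abs_lt.2 ⟨neg_pi_div_two_lt_arcsin.2 (abs_lt.1 hy).1, arcsin_lt_pi_div_two.2 (abs_lt.1 hy).2⟩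

/-- The branch of `sin⁻¹` with values in `[kπ - π/2, kπ + π/2]`. -/
noncomputable def sinInv (k : ℤ) (y : ℝ) : ℝ := k * π + (-1) ^ k * arcsin y

theorem sin_sinInv (k : ℤ) {y : ℝ} (hy : |y| ≤ 1) : sin (sinInv k y) = y := by
  rw [sinInv, add_comm, sin_add_int_mul_pi]
  rcases Int.even_or_odd k with hk | hk <;>
    simp [hk.neg_one_zpow, sin_arcsin (abs_le.1 hy).1 (abs_le.1 hy).2]

theorem abs_sinInv_sub_int_mul_pi (k : ℤ) (y : ℝ) : |sinInv k y - k * π| = |arcsin y| := by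
  simp [sinInv, abs_mul]

theorem dist_sinInv_sinInv (k : ℤ) (u v : ℝ) :
    dist (sinInv k u) (sinInv k v) = dist (arcsin u) (arcsin v) := by
  simp [Real.dist_eq, sinInv, ← mul_sub, abs_mul]

theorem eq_sinInv_of_sin_eq {t y : ℝ} {k : ℤ} (ht : sin t = y) (hk : |t - k * π| ≤ π / 2) :
    t = sinInv k y := by
  set s := t - k * π
  have hs : arcsin (sin s) = s := arcsin_sin (abs_le.1 hk).1 (abs_le.1 hk).2
  have hsin : sin t = (-1) ^ k * sin s := by rw [← sin_add_int_mul_pi]; simp [s]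
  rcases Int.even_or_odd k with hk | hk
  · rw [hk.neg_one_zpow, one_mul] at hsin
    rw [sinInv, hk.neg_one_zpow, ← ht, hsin, hs]; ring
  · rw [hk.neg_one_zpow, neg_one_mul] at hsin
    rw [sinInv, hk.neg_one_zpow, ← ht, hsin, arcsin_neg, hs]; ring

def PerturbationBound (f : ℝ × ℝ → ℝ) : Prop :=
  ∀ ψ, f ψ ^ 2 + (|fderiv ℝ f ψ (1, 0)| + |fderiv ℝ f ψ (0, 1)|) ^ 2 < 1

namespace PerturbationBound

variable {f : ℝ × ℝ → ℝ}

theorem abs_lt_one (hb : PerturbationBound f) (ψ : ℝ × ℝ) : |f ψ| < 1 :=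
  (sq_lt_one_iff_abs_lt_one _).1 (by nlinarith [hb ψ])

theorem abs_add_abs_lt_sqrt (hb : PerturbationBound f) (ψ : ℝ × ℝ) :
    |fderiv ℝ f ψ (1, 0)| + |fderiv ℝ f ψ (0, 1)| < √(1 - f ψ ^ 2) :=
  (lt_sqrt (by positivity)).2 (by linarith [hb ψ])

theorem dist_arcsin_comp_lt (hd : Differentiable ℝ f) (hb : PerturbationBound f) {x y : ℝ × ℝ}
    (hxy : x ≠ y) : dist (arcsin (f x)) (arcsin (f y)) < dist x y := by
  refine dist_lt_dist_of_norm_fderiv_lt_one (g := fun ψ => arcsin (f ψ))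
    (g' := fun ψ => (1 / √(1 - f ψ ^ 2)) • fderiv ℝ f ψ) (fun ψ => ?_) (fun ψ => ?_) hxy
  · obtain ⟨h₁, h₂⟩ := abs_lt.1 (hb.abs_lt_one ψ)
    exact (hasDerivAt_arcsin h₁.ne' h₂.ne).comp_hasFDerivAt ψ (hd ψ).hasFDerivAt
  · have hs := hb.abs_add_abs_lt_sqrt ψ
    have hs0 : 0 < √(1 - f ψ ^ 2) := (by positivity : (0 : ℝ) ≤ _).trans_lt hs
    rw [norm_smul, Real.norm_of_nonneg (by positivity), one_div_mul_eq_div, div_lt_one hs0]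
    exact (fderiv ℝ f ψ).norm_le_abs_apply_add_abs_apply.trans_lt hs

/-- At a solution of `sin t = f ψ` the rows of the Jacobian of `sin - f` are diagonally dominant. -/
theorem abs_lt_abs_cos_sub (hb : PerturbationBound f) {ψ : ℝ × ℝ} {t : ℝ} (ht : sin t = f ψ) :
    |fderiv ℝ f ψ (0, 1)| < |cos t - fderiv ℝ f ψ (1, 0)| ∧
      |fderiv ℝ f ψ (1, 0)| < |cos t - fderiv ℝ f ψ (0, 1)| := by
  have hcos : |cos t| = √(1 - f ψ ^ 2) := by rw [abs_cos_eq_sqrt_one_sub_sin_sq, ht]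
  have hs := hb.abs_add_abs_lt_sqrt ψ
  constructor <;> linarith [abs_sub_abs_le_abs_sub (cos t) (fderiv ℝ f ψ (1, 0)),
    abs_sub_abs_le_abs_sub (cos t) (fderiv ℝ f ψ (0, 1))]

end PerturbationBound

theorem mul_sub_mul_ne_zero_of_abs_lt {p q r s : ℝ} (h₁ : |q| < |p|) (h₂ : |r| < |s|) :
    p * s - q * r ≠ 0 := by
  intro h
  have : |q * r| < |p * s| := by
    rw [abs_mul, abs_mul]; exact mul_lt_mul'' h₁ h₂ (abs_nonneg _) (abs_nonneg _)
  rw [sub_eq_zero.1 h] at this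
  exact lt_irrefl _ this

noncomputable def piLatticePt (k : ℤ × ℤ) : ℝ × ℝ := (k.1 * π, k.2 * π)

theorem piLatticePt_add (k k' : ℤ × ℤ) :
    piLatticePt (k + k') = piLatticePt k + piLatticePt k' := by
  simp only [piLatticePt, Prod.mk_add_mk, Prod.fst_add, Prod.snd_add, Int.cast_add, add_mul]

theorem piLatticePt_two_smul (n : ℤ × ℤ) :
    piLatticePt (2 • n) = (2 * π * n.1, 2 * π * n.2) := by
  ext <;> simp only [piLatticePt, two_nsmul, Prod.fst_add, Prod.snd_add, Int.cast_add] <;> ring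

theorem dist_piLatticePt (ψ : ℝ × ℝ) (k : ℤ × ℤ) :
    dist ψ (piLatticePt k) = max |ψ.1 - k.1 * π| |ψ.2 - k.2 * π| := by
  simp [Prod.dist_eq, Real.dist_eq, piLatticePt]

theorem exists_mem_closedBall_piLatticePt (ψ : ℝ × ℝ) :
    ∃ k, ψ ∈ closedBall (piLatticePt k) (π / 2) := by
  obtain ⟨k₁, hk₁⟩ := exists_abs_sub_int_mul_pi_le ψ.1
  obtain ⟨k₂, hk₂⟩ := exists_abs_sub_int_mul_pi_le ψ.2
  exact ⟨(k₁, k₂), by rw [mem_closedBall, dist_piLatticePt]; exact max_le hk₁ hk₂⟩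

theorem eq_of_mem_ball_piLatticePt {ψ : ℝ × ℝ} {k k' : ℤ × ℤ}
    (hk : ψ ∈ ball (piLatticePt k) (π / 2)) (hk' : ψ ∈ ball (piLatticePt k') (π / 2)) :
    k = k' := by
  rw [mem_ball, dist_piLatticePt, max_lt_iff] at hk hk'
  exact Prod.ext (eq_of_abs_sub_int_mul_pi_lt hk.1 hk'.1) (eq_of_abs_sub_int_mul_pi_lt hk.2 hk'.2)

theorem exists_mem_pair_add_two_smul (k : ℤ × ℤ) :
    ∃ r ∈ ({0, 1} ×ˢ {0, 1} : Set (ℤ × ℤ)), ∃ n, k = r + 2 • n := by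
  refine ⟨(k.1 % 2, k.2 % 2), ⟨?_, ?_⟩, (k.1 / 2, k.2 / 2), Prod.ext ?_ ?_⟩ <;>
    simp only [mem_insert_iff, mem_singleton_iff, Prod.fst_add, Prod.snd_add, two_nsmul] <;> omega

theorem mem_basePts_iff {ψ : ℝ × ℝ} :
    ψ ∈ basePts ↔ ∃ r ∈ ({0, 1} ×ˢ {0, 1} : Set (ℤ × ℤ)), piLatticePt r = ψ := by
  simp only [basePts, piLatticePt, mem_insert_iff, mem_singleton_iff, mem_prod, Prod.exists]
  constructor
  · rintro (rfl | rfl | rfl | rfl)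
    exacts [⟨0, 0, by simp⟩, ⟨0, 1, by simp⟩, ⟨1, 0, by simp⟩, ⟨1, 1, by simp⟩]
  · rintro ⟨a, b, ⟨rfl | rfl, rfl | rfl⟩, rfl⟩ <;> simp

def SolvesSinSystem (f₁ f₂ : ℝ × ℝ → ℝ) (ψ : ℝ × ℝ) : Prop :=
  sin ψ.1 = f₁ ψ ∧ sin ψ.2 = f₂ ψ

noncomputable def sinInvMap (f₁ f₂ : ℝ × ℝ → ℝ) (k : ℤ × ℤ) (ψ : ℝ × ℝ) : ℝ × ℝ :=
  (sinInv k.1 (f₁ ψ), sinInv k.2 (f₂ ψ))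

section SinSystem

variable {f₁ f₂ : ℝ × ℝ → ℝ}

theorem det_fderiv_Fmap (hd₁ : Differentiable ℝ f₁) (hd₂ : Differentiable ℝ f₂) (ψ : ℝ × ℝ) :
    LinearMap.det (fderiv ℝ (Fmap f₁ f₂) ψ).toLinearMap =
      (cos ψ.1 - fderiv ℝ f₁ ψ (1, 0)) * (cos ψ.2 - fderiv ℝ f₂ ψ (0, 1)) -
        fderiv ℝ f₁ ψ (0, 1) * fderiv ℝ f₂ ψ (1, 0) := by
  have h₁ := (hasDerivAt_sin ψ.1).comp_hasFDerivAt ψ (hasFDerivAt_fst (𝕜 := ℝ) (p := ψ))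
  have h₂ := (hasDerivAt_sin ψ.2).comp_hasFDerivAt ψ (hasFDerivAt_snd (𝕜 := ℝ) (p := ψ))
  have hF : HasFDerivAt (Fmap f₁ f₂) _ ψ :=
    (h₁.sub (hd₁ ψ).hasFDerivAt).prodMk (h₂.sub (hd₂ ψ).hasFDerivAt)
  rw [hF.fderiv, ← LinearMap.det_toMatrix (Module.Basis.finTwoProd ℝ), Matrix.det_fin_two]
  simp [LinearMap.toMatrix_apply]

theorem det_fderiv_Fmap_ne_zero (hd₁ : Differentiable ℝ f₁) (hd₂ : Differentiable ℝ f₂)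
    (hb₁ : PerturbationBound f₁) (hb₂ : PerturbationBound f₂) {ψ : ℝ × ℝ}
    (h₁ : sin ψ.1 = f₁ ψ) (h₂ : sin ψ.2 = f₂ ψ) :
    LinearMap.det (fderiv ℝ (Fmap f₁ f₂) ψ).toLinearMap ≠ 0 := by
  rw [det_fderiv_Fmap hd₁ hd₂]
  exact mul_sub_mul_ne_zero_of_abs_lt (hb₁.abs_lt_abs_cos_sub h₁).1 (hb₂.abs_lt_abs_cos_sub h₂).2

theorem sinInvMap_mem_closedBall (k : ℤ × ℤ) (ψ : ℝ × ℝ) :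
    sinInvMap f₁ f₂ k ψ ∈ closedBall (piLatticePt k) (π / 2) := by
  rw [mem_closedBall, dist_piLatticePt]
  simp only [sinInvMap, abs_sinInv_sub_int_mul_pi]
  exact max_le (abs_arcsin_le_pi_div_two _) (abs_arcsin_le_pi_div_two _)

theorem dist_sinInvMap_lt (hd₁ : Differentiable ℝ f₁) (hd₂ : Differentiable ℝ f₂)
    (hb₁ : PerturbationBound f₁) (hb₂ : PerturbationBound f₂) (k : ℤ × ℤ) {x y : ℝ × ℝ}
    (hxy : x ≠ y) : dist (sinInvMap f₁ f₂ k x) (sinInvMap f₁ f₂ k y) < dist x y := by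
  rw [Prod.dist_eq]
  simp only [sinInvMap, dist_sinInv_sinInv]
  exact max_lt (hb₁.dist_arcsin_comp_lt hd₁ hxy) (hb₂.dist_arcsin_comp_lt hd₂ hxy)

theorem SolvesSinSystem.eq_sinInvMap {ψ : ℝ × ℝ} {k : ℤ × ℤ} (hs : SolvesSinSystem f₁ f₂ ψ)
    (hψ : ψ ∈ closedBall (piLatticePt k) (π / 2)) : sinInvMap f₁ f₂ k ψ = ψ := by
  rw [mem_closedBall, dist_piLatticePt, max_le_iff] at hψ
  exact Prod.ext (eq_sinInv_of_sin_eq hs.1 hψ.1).symm (eq_sinInv_of_sin_eq hs.2 hψ.2).symm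

theorem isFixedPt_sinInvMap_iff (h₁ : ∀ ψ, |f₁ ψ| ≤ 1) (h₂ : ∀ ψ, |f₂ ψ| ≤ 1) (k : ℤ × ℤ)
    (ψ : ℝ × ℝ) : IsFixedPt (sinInvMap f₁ f₂ k) ψ ↔
      SolvesSinSystem f₁ f₂ ψ ∧ ψ ∈ closedBall (piLatticePt k) (π / 2) := by
  refine ⟨fun hψ => ⟨⟨?_, ?_⟩, hψ ▸ sinInvMap_mem_closedBall k ψ⟩, fun hψ => hψ.1.eq_sinInvMap hψ.2⟩
  · rw [← congrArg Prod.fst hψ]; exact sin_sinInv _ (h₁ ψ)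
  · rw [← congrArg Prod.snd hψ]; exact sin_sinInv _ (h₂ ψ)

theorem existsUnique_solvesSinSystem_mem_closedBall (hd₁ : Differentiable ℝ f₁)
    (hd₂ : Differentiable ℝ f₂) (hb₁ : PerturbationBound f₁) (hb₂ : PerturbationBound f₂)
    (k : ℤ × ℤ) : ∃! ψ, SolvesSinSystem f₁ f₂ ψ ∧ ψ ∈ closedBall (piLatticePt k) (π / 2) := by
  simpa only [isFixedPt_sinInvMap_iff (fun ψ => (hb₁.abs_lt_one ψ).le)
    (fun ψ => (hb₂.abs_lt_one ψ).le)] using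
    existsUnique_isFixedPt_of_dist_lt (isCompact_closedBall _ _) (sinInvMap_mem_closedBall k)
      fun _ _ => dist_sinInvMap_lt hd₁ hd₂ hb₁ hb₂ k

theorem SolvesSinSystem.dist_piLatticePt {ψ : ℝ × ℝ} {k : ℤ × ℤ}
    (hs : SolvesSinSystem f₁ f₂ ψ) (hψ : ψ ∈ closedBall (piLatticePt k) (π / 2)) :
    dist ψ (piLatticePt k) = max |arcsin (f₁ ψ)| |arcsin (f₂ ψ)| := by
  conv_lhs => rw [← hs.eq_sinInvMap hψ]
  rw [_root_.dist_piLatticePt, sinInvMap, abs_sinInv_sub_int_mul_pi, abs_sinInv_sub_int_mul_pi]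

theorem SolvesSinSystem.mem_ball (hb₁ : PerturbationBound f₁) (hb₂ : PerturbationBound f₂)
    {ψ : ℝ × ℝ} {k : ℤ × ℤ} (hs : SolvesSinSystem f₁ f₂ ψ)
    (hψ : ψ ∈ closedBall (piLatticePt k) (π / 2)) : ψ ∈ ball (piLatticePt k) (π / 2) := by
  rw [Metric.mem_ball, hs.dist_piLatticePt hψ]
  exact max_lt (abs_arcsin_lt_pi_div_two (hb₁.abs_lt_one ψ))
    (abs_arcsin_lt_pi_div_two (hb₂.abs_lt_one ψ))

theorem SolvesSinSystem.dist_piLatticePt_le {ψ : ℝ × ℝ} {k : ℤ × ℤ} {η : ℝ}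
    (hs : SolvesSinSystem f₁ f₂ ψ) (hψ : ψ ∈ closedBall (piLatticePt k) (π / 2))
    (hη : ∀ ψ, |f₁ ψ| ≤ η ∧ |f₂ ψ| ≤ η) (hη₁ : η ≤ 1) : dist ψ (piLatticePt k) ≤ π / 2 * η := by
  rw [hs.dist_piLatticePt hψ]
  have hπ : 0 ≤ π / 2 := by positivity
  obtain ⟨h₁, h₂⟩ := hη ψ
  exact max_le
    ((abs_arcsin_le_pi_div_two_mul_abs (h₁.trans hη₁)).trans (mul_le_mul_of_nonneg_left h₁ hπ))
    ((abs_arcsin_le_pi_div_two_mul_abs (h₂.trans hη₁)).trans (mul_le_mul_of_nonneg_left h₂ hπ))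

theorem apply_add_piLatticePt_two_smul {f : ℝ × ℝ → ℝ}
    (hper : ∀ ψ : ℝ × ℝ, f (ψ.1 + 2 * π, ψ.2) = f ψ ∧ f (ψ.1, ψ.2 + 2 * π) = f ψ)
    (ψ : ℝ × ℝ) (n : ℤ × ℤ) : f (ψ + piLatticePt (2 • n)) = f ψ := by
  have h₁ : Periodic (fun t => f (t, ψ.2 + n.2 * (2 * π))) (2 * π) := fun t =>
    (hper (t, ψ.2 + n.2 * (2 * π))).1
  have h₂ : Periodic (fun t => f (ψ.1, t)) (2 * π) := fun t => (hper (ψ.1, t)).2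
  calc f (ψ + piLatticePt (2 • n)) = f (ψ.1 + n.1 * (2 * π), ψ.2 + n.2 * (2 * π)) := by
        rw [piLatticePt_two_smul]
        congr 1
        ext <;> simp only [Prod.fst_add, Prod.snd_add] <;> ring
    _ = f (ψ.1, ψ.2 + n.2 * (2 * π)) := h₁.int_mul n.1 ψ.1
    _ = f ψ := h₂.int_mul n.2 ψ.2

theorem SolvesSinSystem.add_piLatticePt_two_smul
    (hper₁ : ∀ ψ : ℝ × ℝ, f₁ (ψ.1 + 2 * π, ψ.2) = f₁ ψ ∧ f₁ (ψ.1, ψ.2 + 2 * π) = f₁ ψ)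
    (hper₂ : ∀ ψ : ℝ × ℝ, f₂ (ψ.1 + 2 * π, ψ.2) = f₂ ψ ∧ f₂ (ψ.1, ψ.2 + 2 * π) = f₂ ψ)
    {ψ : ℝ × ℝ} (hs : SolvesSinSystem f₁ f₂ ψ) (n : ℤ × ℤ) :
    SolvesSinSystem f₁ f₂ (ψ + piLatticePt (2 • n)) := by
  have hsin : ∀ (t : ℝ) (m : ℤ), sin (t + 2 * π * m) = sin t := fun t m => by
    rw [← sin_add_int_mul_two_pi t m]; ring_nf
  constructor
  · rw [apply_add_piLatticePt_two_smul hper₁, ← hs.1, piLatticePt_two_smul, Prod.fst_add, hsin]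
  · rw [apply_add_piLatticePt_two_smul hper₂, ← hs.2, piLatticePt_two_smul, Prod.snd_add, hsin]

end SinSystem

noncomputable def reduceMod2Pi (ψ : ℝ × ℝ) : ℝ × ℝ :=
  (toIcoMod two_pi_pos 0 ψ.1, toIcoMod two_pi_pos 0 ψ.2)

theorem reduceMod2Pi_mem (ψ : ℝ × ℝ) :
    reduceMod2Pi ψ ∈ Ico 0 (2 * π) ×ˢ Ico 0 (2 * π) :=
  ⟨toIcoMod_mem_Ico' two_pi_pos ψ.1, toIcoMod_mem_Ico' two_pi_pos ψ.2⟩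

theorem reduceMod2Pi_eq_self {ψ : ℝ × ℝ} (hψ : ψ ∈ Ico 0 (2 * π) ×ˢ Ico 0 (2 * π)) :
    reduceMod2Pi ψ = ψ :=
  Prod.ext ((toIcoMod_eq_self _).2 (by simpa using hψ.1))
    ((toIcoMod_eq_self _).2 (by simpa using hψ.2))

theorem reduceMod2Pi_eq_iff {ψ ψ' : ℝ × ℝ} :
    reduceMod2Pi ψ = reduceMod2Pi ψ' ↔ ∃ n, ψ' = ψ + piLatticePt (2 • n) := by
  simp only [reduceMod2Pi, Prod.ext_iff, toIcoMod_eq_toIcoMod, piLatticePt_two_smul,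
    Prod.fst_add, Prod.snd_add, zsmul_eq_mul, Prod.exists]
  constructor
  · rintro ⟨⟨n, hn⟩, m, hm⟩
    exact ⟨n, m, by linarith, by linarith⟩
  · rintro ⟨n, m, hn, hm⟩
    exact ⟨⟨n, by rw [hn]; ring⟩, m, by rw [hm]; ring⟩

theorem exists_reduceMod2Pi_eq_add (ψ : ℝ × ℝ) :
    ∃ n, reduceMod2Pi ψ = ψ + piLatticePt (2 • n) :=
  reduceMod2Pi_eq_iff.1 (reduceMod2Pi_eq_self (reduceMod2Pi_mem ψ)).symm

theorem ncard_setOf_mem_Ico_prod_eq_four {P : ℝ × ℝ → Prop}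
    (hper : ∀ ψ n, P ψ → P (ψ + piLatticePt (2 • n)))
    (hunique : ∀ k, ∃! ψ, P ψ ∧ ψ ∈ closedBall (piLatticePt k) (π / 2))
    (hball : ∀ k ψ, P ψ → ψ ∈ closedBall (piLatticePt k) (π / 2) →
      ψ ∈ ball (piLatticePt k) (π / 2)) :
    {ψ ∈ Ico 0 (2 * π) ×ˢ Ico 0 (2 * π) | P ψ}.ncard = 4 := by
  choose p hp hpu using hunique
  have hp_inj : Injective p := fun k k' h =>
    eq_of_mem_ball_piLatticePt (hball _ _ (hp k).1 (hp k).2) (h ▸ hball _ _ (hp k').1 (hp k').2)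
  have hp_add : ∀ k n, p (k + 2 • n) = p k + piLatticePt (2 • n) := fun k n =>
    (hpu _ _ ⟨hper _ _ (hp k).1, by
      rw [piLatticePt_add, mem_closedBall, dist_add_right]; exact (hp k).2⟩).symm
  have hS : {ψ ∈ Ico 0 (2 * π) ×ˢ Ico 0 (2 * π) | P ψ} =
      (reduceMod2Pi ∘ p) '' ({0, 1} ×ˢ {0, 1}) := by
    ext ψ
    constructor
    · rintro ⟨hψI, hψ⟩
      obtain ⟨k, hk⟩ := exists_mem_closedBall_piLatticePt ψ
      obtain ⟨r, hr, n, rfl⟩ := exists_mem_pair_add_two_smul k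
      refine ⟨r, hr, ?_⟩
      rw [comp_apply, ← reduceMod2Pi_eq_self hψI, hpu _ ψ ⟨hψ, hk⟩, hp_add]
      exact reduceMod2Pi_eq_iff.2 ⟨n, rfl⟩
    · rintro ⟨r, -, rfl⟩
      obtain ⟨n, hn⟩ := exists_reduceMod2Pi_eq_add (p r)
      exact ⟨reduceMod2Pi_mem _, by rw [comp_apply, hn]; exact hper _ _ (hp r).1⟩
  have hinj : InjOn (reduceMod2Pi ∘ p) ({0, 1} ×ˢ {0, 1}) := by
    rintro r hr r' hr' h
    obtain ⟨n, hn⟩ := reduceMod2Pi_eq_iff.1 h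
    obtain rfl := hp_inj (hn.trans (hp_add r n).symm)
    simp only [mem_prod, mem_insert_iff, mem_singleton_iff, Prod.fst_add, Prod.snd_add,
      two_nsmul] at hr hr'
    ext <;> simp only [Prod.fst_add, Prod.snd_add, two_nsmul] <;> omega
  rw [hS, hinj.ncard_image, ncard_prod, ncard_pair zero_ne_one]

/-- Lemma 7 (2-dimensional fixed point theorem): if `f₁, f₂ : 𝕋² → ℝ` are differentiable
and satisfy `f_i² + (|∂f_i/∂ψ₁| + |∂f_i/∂ψ₂|)² < 1`, then the system `sin ψ₁ = f₁(ψ)`,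
`sin ψ₂ = f₂(ψ)` has exactly 4 solutions on the torus, all simple; moreover, there is a
constant `C` such that if `|f₁|, |f₂| ≤ η` with `η` sufficiently small, every solution
is within `Cη` of one of `(0,0)`, `(0,π)`, `(π,0)`, `(π,π)` (modulo `2π` in each
coordinate), and each of these four points has exactly one solution nearby. -/
theorem splitting_quadratic_stmt19 (f₁ f₂ : ℝ × ℝ → ℝ)
    (hd₁ : Differentiable ℝ f₁) (hd₂ : Differentiable ℝ f₂)
    (hper₁ : ∀ ψ : ℝ × ℝ, f₁ (ψ.1 + 2 * π, ψ.2) = f₁ ψ ∧ f₁ (ψ.1, ψ.2 + 2 * π) = f₁ ψ)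
    (hper₂ : ∀ ψ : ℝ × ℝ, f₂ (ψ.1 + 2 * π, ψ.2) = f₂ ψ ∧ f₂ (ψ.1, ψ.2 + 2 * π) = f₂ ψ)
    (hb₁ : ∀ ψ : ℝ × ℝ, (f₁ ψ) ^ 2 +
      (|fderiv ℝ f₁ ψ ((1 : ℝ), (0 : ℝ))| + |fderiv ℝ f₁ ψ ((0 : ℝ), (1 : ℝ))|) ^ 2 < 1)
    (hb₂ : ∀ ψ : ℝ × ℝ, (f₂ ψ) ^ 2 +
      (|fderiv ℝ f₂ ψ ((1 : ℝ), (0 : ℝ))| + |fderiv ℝ f₂ ψ ((0 : ℝ), (1 : ℝ))|) ^ 2 < 1) :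
    ({ψ ∈ Set.Ico (0 : ℝ) (2 * π) ×ˢ Set.Ico (0 : ℝ) (2 * π) |
        Real.sin ψ.1 = f₁ ψ ∧ Real.sin ψ.2 = f₂ ψ}.ncard = 4) ∧
    (∀ ψ : ℝ × ℝ, Real.sin ψ.1 = f₁ ψ → Real.sin ψ.2 = f₂ ψ →
      LinearMap.det (fderiv ℝ (Fmap f₁ f₂) ψ).toLinearMap ≠ 0) ∧
    (∃ C : ℝ, 0 < C ∧ ∃ η₀ : ℝ, 0 < η₀ ∧ ∀ η : ℝ, 0 < η → η ≤ η₀ →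
      (∀ ψ : ℝ × ℝ, |f₁ ψ| ≤ η ∧ |f₂ ψ| ≤ η) →
      (∀ ψ : ℝ × ℝ, Real.sin ψ.1 = f₁ ψ → Real.sin ψ.2 = f₂ ψ →
        ∃ ψ0 ∈ basePts, ∃ j l : ℤ,
          dist ψ (ψ0.1 + 2 * π * (j : ℝ), ψ0.2 + 2 * π * (l : ℝ)) ≤ C * η) ∧
      (∀ ψ0 ∈ basePts, ∃! ψ : ℝ × ℝ,
        (Real.sin ψ.1 = f₁ ψ ∧ Real.sin ψ.2 = f₂ ψ) ∧ dist ψ ψ0 ≤ C * η)) := by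
  have hsol := existsUnique_solvesSinSystem_mem_closedBall hd₁ hd₂ hb₁ hb₂
  refine ⟨ncard_setOf_mem_Ico_prod_eq_four
      (fun _ n hψ => SolvesSinSystem.add_piLatticePt_two_smul hper₁ hper₂ hψ n) hsol
      (fun _ _ hψ hk => SolvesSinSystem.mem_ball hb₁ hb₂ hψ hk),
    fun ψ h₁ h₂ => det_fderiv_Fmap_ne_zero hd₁ hd₂ hb₁ hb₂ h₁ h₂,
    π / 2, by positivity, 1, one_pos, fun η _ hη₁ hfη => ⟨fun ψ h₁ h₂ => ?_, fun ψ0 hψ0 => ?_⟩⟩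
  · obtain ⟨k, hk⟩ := exists_mem_closedBall_piLatticePt ψ
    obtain ⟨r, hr, n, rfl⟩ := exists_mem_pair_add_two_smul k
    refine ⟨piLatticePt r, mem_basePts_iff.2 ⟨r, hr, rfl⟩, n.1, n.2, ?_⟩
    have hdist := SolvesSinSystem.dist_piLatticePt_le ⟨h₁, h₂⟩ hk hfη hη₁
    rwa [piLatticePt_add, piLatticePt_two_smul] at hdist
  · obtain ⟨r, -, rfl⟩ := mem_basePts_iff.1 hψ0
    obtain ⟨ψ, hψ, huniq⟩ := hsol r
    refine ⟨ψ, ⟨hψ.1, hψ.1.dist_piLatticePt_le hψ.2 hfη hη₁⟩, fun ψ' hψ' => huniq ψ' ⟨hψ'.1, ?_⟩⟩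
    exact mem_closedBall.2 (hψ'.2.trans (by nlinarith [pi_pos]))
end
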